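/- Consider a PFB instance with r_j = 0 for all jobs j, due dates satisfying d_1 ≤ d_2 ≤ … ≤ d_n, and nonnegative weights w_j. Then for every feasible schedule S there exists a feasible permutation schedule Ŝ such that Σ_{j=1}^{n} w_j·U_j(Ŝ) ≤ Σ_{j=1}^{n} w_j·U_j(S) and the on-time jobs of Ŝ are scheduled in the order of their indices: for any two jobs j < j' that are both on time in Ŝ, c_{i,j}(Ŝ) ≤ c_{i,j'}(Ŝ) for every machine i. -/

import Mathlib

/-!
Let `T` be the set of jobs that are on time in `c`. Since all release dates are equal, sorting
the completion times of each machine separately gives a feasible schedule whose `l`-th slot takes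
the `l`-th smallest completion time on every machine: each machine keeps its multiset of
completion times, and if every job finishes at least `p` later on one machine than on the
previous one, so does the `l`-th smallest time. Give the first `|T|` slots to the jobs of `T` in
index order, the remaining slots to the other jobs, and delay the latter beyond every due date.
The job of `T` in slot `l` is still on time, since the `l + 1` jobs of `T` with index at most
its own finish in `c` by their due dates, which are at most its own. So the on-time jobs are
exactly `T`, in index order, and no job late in the new schedule was on time in `c`.
-/

/-- A PFB instance has `m+1` machines (indexed by `Fin (m+1)`, so at least one) and
`n+1` jobs (indexed by `Fin (n+1)`, so at least one). `p i` is the processing time of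
machine `i`, `b i` its maximum batch size, `r j` the release date of job `j`.
A schedule `c` assigns to machine `i` and job `j` the completion time `c i j`.
`Feasible p b r c` says: (i) each job finishes on the first machine no earlier than its
release date plus `p 0`; (ii) consecutive machines leave enough processing time;
(iii) two jobs with different completion times on a machine differ by at least the
processing time (jobs with equal completion time form one batch); (iv) at most `b i`
jobs complete at any given time on machine `i`. -/
def Feasible {m n : ℕ} (p b : Fin (m + 1) → ℕ) (r : Fin (n + 1) → ℕ)
    (c : Fin (m + 1) → Fin (n + 1) → ℕ) : Prop :=
  (∀ j, r j + p 0 ≤ c 0 j) ∧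
  (∀ (i : Fin m) (j : Fin (n + 1)), c i.castSucc j + p i.succ ≤ c i.succ j) ∧
  (∀ (i : Fin (m + 1)) (j j' : Fin (n + 1)),
      c i j ≠ c i j' → c i j + p i ≤ c i j' ∨ c i j' + p i ≤ c i j) ∧
  (∀ (i : Fin (m + 1)) (t : ℕ),
      (Finset.univ.filter (fun j => c i j = t)).card ≤ b i)

/-- `c` is a permutation schedule ordered by the permutation `σ`:
on every machine the completion times are nondecreasing along `σ`. -/
def OrderedBy {m n : ℕ} (c : Fin (m + 1) → Fin (n + 1) → ℕ)
    (σ : Equiv.Perm (Fin (n + 1))) : Prop :=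
  ∀ i : Fin (m + 1), Monotone fun j => c i (σ j)

open Finset

namespace Tuple

variable {N : ℕ} {α β : Type*} [LinearOrder α] [LinearOrder β]

theorem lt_card_le_iff_apply_sort_le (f : Fin N → α) (k : Fin N) (x : α) :
    (k : ℕ) < #{j | f j ≤ x} ↔ f (sort f k) ≤ x := by
  have h := lt_card_le_iff_apply_le_of_monotone (j := k) (a := x) (monotone_sort f)
  rwa [card_equiv (sort f) (t := {j | f j ≤ x}) (by simp)] at h

theorem monotone_apply_sort_le_apply_sort {φ : α → β} (hφ : Monotone φ) {f : Fin N → α}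
    {g : Fin N → β} (h : ∀ j, φ (f j) ≤ g j) (k : Fin N) :
    φ (f (sort f k)) ≤ g (sort g k) := by
  have hsort : (φ ∘ f) ∘ sort f = (φ ∘ f) ∘ sort (φ ∘ f) :=
    comp_sort_eq_comp_iff_monotone.2 (hφ.comp (monotone_sort f))
  rw [show φ (f (sort f k)) = (φ ∘ f) (sort (φ ∘ f) k) from congrFun hsort k,
    ← lt_card_le_iff_apply_sort_le]
  refine ((lt_card_le_iff_apply_sort_le g k _).2 le_rfl).trans_le (card_le_card fun j => ?_)
  simp only [mem_filter, mem_univ, true_and, Function.comp_apply]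
  exact (h j).trans

end Tuple

theorem Finset.card_filter_comp_perm {ι : Type*} [Fintype ι] (π : Equiv.Perm ι) (P : ι → Prop)
    [DecidablePred P] : #{j | P (π j)} = #{j | P j} :=
  card_equiv π (by simp)

section Schedule

variable {m n : ℕ} {p b : Fin (m + 1) → ℕ} {r : Fin (n + 1) → ℕ}
  {c : Fin (m + 1) → Fin (n + 1) → ℕ}

theorem Feasible.processing_le (hc : Feasible p b r c) (i : Fin (m + 1)) (j : Fin (n + 1)) :
    p i ≤ c i j := by
  obtain ⟨hfirst, hnext, -, -⟩ := hc
  induction i using Fin.cases with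
  | zero => exact (hfirst j).trans' (Nat.le_add_left _ _)
  | succ i => exact (hnext i j).trans' (Nat.le_add_left _ _)

theorem Feasible.comp_perm (hc : Feasible p b r c) (π : Equiv.Perm (Fin (n + 1))) :
    Feasible p b (r ∘ π) (fun i j => c i (π j)) := by
  obtain ⟨hfirst, hnext, hgap, hbatch⟩ := hc
  refine ⟨fun j => hfirst (π j), fun i j => hnext i (π j), fun i j j' => hgap i (π j) (π j'),
    fun i t => ?_⟩
  rw [card_filter_comp_perm π (c i · = t)]
  exact hbatch i t

def sortSchedule (c : Fin (m + 1) → Fin (n + 1) → ℕ) : Fin (m + 1) → Fin (n + 1) → ℕ :=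
  fun i l => c i (Tuple.sort (c i) l)

theorem monotone_sortSchedule (c : Fin (m + 1) → Fin (n + 1) → ℕ) (i : Fin (m + 1)) :
    Monotone (sortSchedule c i) :=
  Tuple.monotone_sort (c i)

theorem feasible_sortSchedule {r₀ : ℕ} (hc : Feasible p b (fun _ => r₀) c) :
    Feasible p b (fun _ => r₀) (sortSchedule c) := by
  obtain ⟨hfirst, hnext, hgap, hbatch⟩ := hc
  refine ⟨fun l => hfirst _, fun i l => ?_, fun i l l' => hgap i _ _, fun i t => ?_⟩
  · exact Tuple.monotone_apply_sort_le_apply_sort (add_left_mono (a := p i.succ)) (hnext i) l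
  · exact (card_filter_comp_perm (Tuple.sort (c i)) (c i · = t)).trans_le (hbatch i t)

def delaySchedule (c : Fin (m + 1) → Fin (n + 1) → ℕ) (L : Finset (Fin (n + 1))) (D : ℕ) :
    Fin (m + 1) → Fin (n + 1) → ℕ :=
  fun i j => c i j + if j ∈ L then D else 0

theorem feasible_delaySchedule (hc : Feasible p b r c) (L : Finset (Fin (n + 1))) {D : ℕ}
    (hD : ∀ i j, c i j < D) : Feasible p b r (delaySchedule c L D) := by
  have hp := hc.processing_le
  obtain ⟨hfirst, hnext, hgap, hbatch⟩ := hc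
  refine ⟨fun j => (hfirst j).trans (Nat.le_add_right _ _), fun i j => ?_,
    fun i j j' hne => ?_, fun i t => ?_⟩
  · have := hnext i j
    simp only [delaySchedule]
    omega
  · have := hgap i j j'; have := hp i j; have := hp i j'; have := hD i j; have := hD i j'
    simp only [delaySchedule] at hne ⊢
    split_ifs at hne ⊢ <;> omega
  · refine (card_le_card ?_).trans (hbatch i (if D ≤ t then t - D else t))
    intro j hj
    have := hD i j
    have ht := (mem_filter.1 hj).2
    simp only [delaySchedule] at ht
    simp only [mem_filter, mem_univ, true_and]
    split_ifs at ht ⊢ <;> omega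

end Schedule

section FrontPerm

variable {N : ℕ} (T : Finset (Fin N))

/-- Sorting by this key lists the elements of `T` in increasing order, followed by the others. -/
def frontKey (j : Fin N) : ℕ := if j ∈ T then j else N + j

def frontPerm : Equiv.Perm (Fin N) := Tuple.sort (frontKey T)

theorem strictMono_frontKey_frontPerm : StrictMono (frontKey T ∘ frontPerm T) := by
  refine (Tuple.monotone_sort _).strictMono_of_injective
    (Function.Injective.comp (fun a b hab => ?_) (frontPerm T).injective)
  unfold frontKey at hab
  split_ifs at hab <;> omega

variable {T}

theorem frontKey_lt_iff {j : Fin N} : frontKey T j < N ↔ j ∈ T := by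
  unfold frontKey; split_ifs with h <;> simp [h]

theorem frontPerm_symm_le_frontPerm_symm {j j' : Fin N} (hj : j ∈ T) (hj' : j' ∈ T)
    (h : j ≤ j') : (frontPerm T).symm j ≤ (frontPerm T).symm j' := by
  rw [← (strictMono_frontKey_frontPerm T).le_iff_le]
  simp [frontKey, hj, hj', h]

theorem frontPerm_not_mem_of_le {l l' : Fin N} (h : l ≤ l') (hl : frontPerm T l ∉ T) :
    frontPerm T l' ∉ T := by
  rw [← frontKey_lt_iff] at hl ⊢
  have := (strictMono_frontKey_frontPerm T).monotone h
  simp only [Function.comp_apply] at this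
  omega

theorem frontPerm_mem_of_le_symm {j : Fin N} (hj : j ∈ T) {l : Fin N}
    (hl : l ≤ (frontPerm T).symm j) : frontPerm T l ∈ T ∧ frontPerm T l ≤ j := by
  have hkey := (strictMono_frontKey_frontPerm T).monotone hl
  simp only [Function.comp_apply, Equiv.apply_symm_apply] at hkey
  have hmem : frontPerm T l ∈ T := by
    rw [← frontKey_lt_iff] at hj ⊢; omega
  refine ⟨hmem, ?_⟩
  simp only [frontKey, hmem, hj, if_true] at hkey
  exact Fin.le_def.2 hkey

end FrontPerm

theorem apply_sort_frontPerm_symm_le {N : ℕ} {α : Type*} [LinearOrder α] {a d : Fin N → α}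
    (hd : Monotone d) {j : Fin N} (hj : a j ≤ d j) :
    a (Tuple.sort a ((frontPerm {j | a j ≤ d j}).symm j)) ≤ d j := by
  set σ := frontPerm {j | a j ≤ d j}
  rw [← Tuple.lt_card_le_iff_apply_sort_le]
  calc ((σ.symm j : Fin N) : ℕ) < #(Iic (σ.symm j)) := by simp
    _ = #((Iic (σ.symm j)).map σ.toEmbedding) := (card_map _).symm
    _ ≤ #{j' | a j' ≤ d j} := card_le_card fun j' hj' => ?_
  obtain ⟨l, hl, rfl⟩ := mem_map.1 hj'
  obtain ⟨hmem, hle⟩ := frontPerm_mem_of_le_symm (mem_filter.2 ⟨mem_univ _, hj⟩) (mem_Iic.1 hl)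
  exact mem_filter.2 ⟨mem_univ _, (mem_filter.1 hmem).2.trans (hd hle)⟩

section OnTimeFirst

variable {m n : ℕ} {p b : Fin (m + 1) → ℕ} {c : Fin (m + 1) → Fin (n + 1) → ℕ}
  {d : Fin (n + 1) → ℕ} {D : ℕ}

def onTimeJobs (c : Fin (m + 1) → Fin (n + 1) → ℕ) (d : Fin (n + 1) → ℕ) :
    Finset (Fin (n + 1)) :=
  {j | c (Fin.last m) j ≤ d j}

def onTimeFirst (c : Fin (m + 1) → Fin (n + 1) → ℕ) (d : Fin (n + 1) → ℕ) (D : ℕ) :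
    Fin (m + 1) → Fin (n + 1) → ℕ :=
  delaySchedule (fun i j => sortSchedule c i ((frontPerm (onTimeJobs c d)).symm j))
    (onTimeJobs c d)ᶜ D

theorem feasible_onTimeFirst {r₀ : ℕ} (hc : Feasible p b (fun _ => r₀) c)
    (hD : ∀ i j, c i j < D) : Feasible p b (fun _ => r₀) (onTimeFirst c d D) :=
  feasible_delaySchedule ((feasible_sortSchedule hc).comp_perm _) _ fun i _ => hD i _

theorem orderedBy_onTimeFirst : OrderedBy (onTimeFirst c d D) (frontPerm (onTimeJobs c d)) := by
  intro i l l' hll'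
  simp only [onTimeFirst, delaySchedule, Equiv.symm_apply_apply, mem_compl]
  refine add_le_add (monotone_sortSchedule c i hll') ?_
  by_cases h : frontPerm (onTimeJobs c d) l ∈ onTimeJobs c d
  · simp [h]
  · simp [h, frontPerm_not_mem_of_le hll' h]

theorem onTimeFirst_of_mem {j : Fin (n + 1)} (hj : j ∈ onTimeJobs c d) (i : Fin (m + 1)) :
    onTimeFirst c d D i j = sortSchedule c i ((frontPerm (onTimeJobs c d)).symm j) := by
  simp [onTimeFirst, delaySchedule, hj]

theorem onTimeFirst_last_le (hd : Monotone d) {j : Fin (n + 1)} (hj : j ∈ onTimeJobs c d) :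
    onTimeFirst c d D (Fin.last m) j ≤ d j := by
  rw [onTimeFirst_of_mem hj]
  exact apply_sort_frontPerm_symm_le hd (mem_filter.1 hj).2

theorem mem_onTimeJobs_of_onTimeFirst_le (hD : ∀ j, d j < D) {j : Fin (n + 1)}
    (h : onTimeFirst c d D (Fin.last m) j ≤ d j) : j ∈ onTimeJobs c d := by
  by_contra hj
  simp only [onTimeFirst, delaySchedule, mem_compl, hj, not_false_eq_true, if_true] at h
  exact (hD j).not_ge (le_of_add_le_right h)

theorem onTimeFirst_le_onTimeFirst {j j' : Fin (n + 1)} (hj : j ∈ onTimeJobs c d)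
    (hj' : j' ∈ onTimeJobs c d) (h : j ≤ j') (i : Fin (m + 1)) :
    onTimeFirst c d D i j ≤ onTimeFirst c d D i j' := by
  rw [onTimeFirst_of_mem hj, onTimeFirst_of_mem hj']
  exact monotone_sortSchedule c i (frontPerm_symm_le_frontPerm_symm hj hj' h)

end OnTimeFirst

theorem sum_mul_late_le {ι α : Type*} [Fintype ι] [LinearOrder α] {w : ι → ℝ}
    (hw : ∀ j, 0 ≤ w j) {d C C' : ι → α} (h : ∀ j, C' j ≤ d j → C j ≤ d j) :
    ∑ j, w j * (if d j < C j then (1 : ℝ) else 0) ≤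
      ∑ j, w j * (if d j < C' j then (1 : ℝ) else 0) := by
  refine sum_le_sum fun j _ => mul_le_mul_of_nonneg_left ?_ (hw j)
  by_cases hj : C' j ≤ d j
  · simp only [(h j hj).not_gt, if_false]
    split_ifs <;> norm_num
  · simp only [lt_of_not_ge hj, if_true]
    split_ifs <;> norm_num

theorem stmt16_general {m n : ℕ} (p b : Fin (m + 1) → ℕ) (r : Fin (n + 1) → ℕ)
    (hr : ∀ j, r j = 0)
    (d : Fin (n + 1) → ℕ) (hd : Monotone d)
    (w : Fin (n + 1) → ℝ) (hw : ∀ j, 0 ≤ w j)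
    (c : Fin (m + 1) → Fin (n + 1) → ℕ) (hc : Feasible p b r c) :
    ∃ chat : Fin (m + 1) → Fin (n + 1) → ℕ,
      Feasible p b r chat ∧ (∃ σ : Equiv.Perm (Fin (n + 1)), OrderedBy chat σ) ∧
      (∑ j, w j * (if d j < chat (Fin.last m) j then (1 : ℝ) else 0)) ≤
        (∑ j, w j * (if d j < c (Fin.last m) j then (1 : ℝ) else 0)) ∧
      ∀ j j' : Fin (n + 1), j < j' →
        chat (Fin.last m) j ≤ d j → chat (Fin.last m) j' ≤ d j' →
        ∀ i : Fin (m + 1), chat i j ≤ chat i j' := by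
  obtain rfl : r = fun _ => 0 := funext hr
  obtain ⟨D, hD⟩ := Finite.exists_le fun x : Fin (m + 1) × Fin (n + 1) => c x.1 x.2 + d x.2
  have hc_lt : ∀ i j, c i j < D + 1 := fun i j => by have := hD (i, j); dsimp at this; omega
  have hd_lt : ∀ j, d j < D + 1 := fun j => by have := hD (0, j); dsimp at this; omega
  have hon : ∀ j, onTimeFirst c d (D + 1) (Fin.last m) j ≤ d j ↔ j ∈ onTimeJobs c d :=
    fun j => ⟨mem_onTimeJobs_of_onTimeFirst_le hd_lt, onTimeFirst_last_le hd⟩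
  refine ⟨onTimeFirst c d (D + 1), feasible_onTimeFirst hc hc_lt, ⟨_, orderedBy_onTimeFirst⟩,
    sum_mul_late_le hw fun j hj => (hon j).2 (mem_filter.2 ⟨mem_univ j, hj⟩),
    fun j j' hjj' hj hj' => onTimeFirst_le_onTimeFirst ((hon j).1 hj) ((hon j').1 hj') hjj'.le⟩

/-- with all release dates `0`, non-decreasing due dates and nonnegative
weights, for every feasible schedule `c` there is a feasible permutation schedule
`chat` whose weighted number of late jobs is at most that of `c` and whose on-time
jobs are scheduled in the order of their indices on every machine. -/
theorem stmt16 {m n : ℕ} (p b : Fin (m + 1) → ℕ) (r : Fin (n + 1) → ℕ)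
    (hp : ∀ i, 1 ≤ p i) (hb : ∀ i, 1 ≤ b i ∧ b i ≤ n + 1)
    (hr : ∀ j, r j = 0)
    (d : Fin (n + 1) → ℕ) (hd : Monotone d)
    (w : Fin (n + 1) → ℝ) (hw : ∀ j, 0 ≤ w j)
    (c : Fin (m + 1) → Fin (n + 1) → ℕ) (hc : Feasible p b r c) :
    ∃ chat : Fin (m + 1) → Fin (n + 1) → ℕ,
      Feasible p b r chat ∧ (∃ σ : Equiv.Perm (Fin (n + 1)), OrderedBy chat σ) ∧
      (∑ j, w j * (if d j < chat (Fin.last m) j then (1 : ℝ) else 0)) ≤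
        (∑ j, w j * (if d j < c (Fin.last m) j then (1 : ℝ) else 0)) ∧
      ∀ j j' : Fin (n + 1), j < j' →
        chat (Fin.last m) j ≤ d j → chat (Fin.last m) j' ≤ d j' →
        ∀ i : Fin (m + 1), chat i j ≤ chat i j' :=
  stmt16_general p b r hr d hd w hw c hc
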